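/- arXiv:1409.0222 — 5 statements merged into one kernel-verified Lean document; each statement's English description precedes it below -/
import Mathlib

section
/- The Rothberger number of the ideal ED_fin equals ℵ₁; that is, there exists an ED_fin-(ω,ω₁)-gap, and ω₁ is the least cardinal λ for which an ED_fin-(ω,λ)-gap exists. -/
/-!
Countable orthogonal families are always separated (Hausdorff), which gives `ℵ₁ ≤ 𝔟(I)` for
every ideal `I`.

For the gap, read the block `a_(2^p - 1)` of `ED_fin`, which has `2^p` points, as the binary tree
of height `p`. On the countable side, `A_n` consists of the nodes in the last `n` levels of every
tree; on the other side, `T_z` consists of the nodes of the branch `z ∈ 2^ω` in every tree, for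
`ℵ₁` many `z`. In each block `A_n` meets `T_z` in at most `n` points. If `C` separated the pair,
then for a single `L` uncountably many `T_z` would have at most `L` points outside `C` in each
block, while `A_n ∩ C` has at most `K_n` points in each block. Take
`(L + 1) · max_{n ≤ L+1} K_n + 1` such branches and a height `P` at which they are pairwise
distinct from level `P - L - 1` on. In block `P` each of them has a node in `C` among its last
`L + 1` nodes, but the last `L + 1` levels lie in `A_(L+1)`, so at each of these levels at most
`max K_n` of the branches pass through `C`.
-/

open Set Filter Cardinal

/-- `I` is an ideal on `ω`: contains all finite sets, downward closed, closed under unions. -/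
def IsIdealOn (I : Set (Set ℕ)) : Prop :=
  (∀ x : Set ℕ, x.Finite → x ∈ I) ∧
  (∀ x y : Set ℕ, x ⊆ y → y ∈ I → x ∈ I) ∧
  (∀ x y : Set ℕ, x ∈ I → y ∈ I → x ∪ y ∈ I)

/-- The pair `⟨A, B⟩` is `I`-orthogonal. -/
def IOrthogonal (I A B : Set (Set ℕ)) : Prop := ∀ s ∈ A, ∀ t ∈ B, s ∩ t ∈ I

/-- `C` separates the pair `⟨A, B⟩` with respect to `I`. -/
def ISeparates (I A B : Set (Set ℕ)) (C : Set ℕ) : Prop :=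
  (∀ s ∈ A, s ∩ C ∈ I) ∧ (∀ t ∈ B, t \ C ∈ I)

/-- The pair `⟨A, B⟩` is an `I`-gap. -/
def IsIGap (I A B : Set (Set ℕ)) : Prop :=
  IOrthogonal I A B ∧ ∀ C : Set ℕ, ¬ ISeparates I A B C

/-- There is an `I`-(ω, lam)-gap. -/
def HasOmegaGap (I : Set (Set ℕ)) (lam : Cardinal) : Prop :=
  ∃ A B : Set (Set ℕ), IsIGap I A B ∧ #A = ℵ₀ ∧ #B = lam

/-- `a` is a partition of `ω` into nonempty finite sets. -/
def IsPartitionFin (a : ℕ → Set ℕ) : Prop :=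
  (∀ i, (a i).Nonempty) ∧ (∀ i, (a i).Finite) ∧
  (∀ i j, i ≠ j → Disjoint (a i) (a j)) ∧ (⋃ i, a i) = Set.univ

/-- `φ` is a submeasure on the powerset of the set `s`. -/
def IsSubmeasureOn (s : Set ℕ) (φ : Set ℕ → ℝ) : Prop :=
  φ ∅ = 0 ∧ (∀ x, x ⊆ s → 0 ≤ φ x) ∧
  (∀ x y, x ⊆ y → y ⊆ s → φ x ≤ φ y) ∧
  (∀ x y, x ⊆ s → y ⊆ s → φ (x ∪ y) ≤ φ x + φ y)

/-- `I = I⟨a_i, φ_i⟩` is the fragmented ideal determined by the partition `a`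
and the submeasures `φ`. -/
def IsFragmentation (I : Set (Set ℕ)) (a : ℕ → Set ℕ) (φ : ℕ → Set ℕ → ℝ) : Prop :=
  IsPartitionFin a ∧ (∀ i, IsSubmeasureOn (a i) (φ i)) ∧
  ∀ x : Set ℕ, x ∈ I ↔ ∃ K : ℝ, ∀ i, φ i (x ∩ a i) ≤ K

/-- Gradual fragmentation of `⟨a_i, φ_i⟩`. -/
def GraduallyFragmented (a : ℕ → Set ℕ) (φ : ℕ → Set ℕ → ℝ) : Prop :=
  ∀ k : ℕ, ∃ m : ℕ, ∀ l : ℕ, ∀ᶠ i in atTop,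
    ∀ B : Finset (Set ℕ), (∀ b ∈ B, b ⊆ a i) → B.card ≤ l →
      (∀ b ∈ B, φ i b ≤ (k : ℝ)) → φ i (⋃₀ (↑B : Set (Set ℕ))) ≤ (m : ℝ)

/-- The restriction `I ↾ X` is tall. -/
def IsTallOn (I : Set (Set ℕ)) (X : Set ℕ) : Prop :=
  ∀ Y : Set ℕ, Y ⊆ X → Y.Infinite → ∃ Z, Z ⊆ Y ∧ Z.Infinite ∧ Z ∈ I

def IsTall (I : Set (Set ℕ)) : Prop := IsTallOn I Set.univ

def SomewhereTall (I : Set (Set ℕ)) : Prop := ∃ X : Set ℕ, X ∉ I ∧ IsTallOn I X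

def NowhereTall (I : Set (Set ℕ)) : Prop := ¬ SomewhereTall I

/-- The unbounding number `𝔟`. -/
noncomputable def unboundingNumber : Cardinal :=
  sInf {c | ∃ F : Set (ℕ → ℕ), #F = c ∧
    ∀ g : ℕ → ℕ, ∃ f ∈ F, ¬ ∀ᶠ i in atTop, f i ≤ g i}

/-- The additivity of the Lebesgue-null ideal, `add(N)`. -/
noncomputable def addNull : Cardinal :=
  sInf {c | ∃ F : Set (Set ℝ), #F = c ∧ (∀ s ∈ F, MeasureTheory.volume s = 0) ∧
    MeasureTheory.volume (⋃₀ F) ≠ 0}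

/-- The interval partition of `ω` with `|a_i| = i + 1`. -/
def edA (i : ℕ) : Set ℕ := Set.Ico (i * (i + 1) / 2) (i * (i + 1) / 2 + (i + 1))

/-- The submeasure `φ_i(x) = |x|` on `P(a_i)`. -/
noncomputable def edPhi (_ : ℕ) (x : Set ℕ) : ℝ := (x.ncard : ℝ)

/-- The fragmented ideal `ED_fin = I⟨a_i, φ_i⟩`. -/
def EDfin : Set (Set ℕ) := {x | ∃ K : ℝ, ∀ i, edPhi i (x ∩ edA i) ≤ K}

lemma IsIdealOn.accumulate_mem {I : Set (Set ℕ)} (hI : IsIdealOn I) {s : ℕ → Set ℕ}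
    (hs : ∀ n, s n ∈ I) (n : ℕ) : accumulate s n ∈ I := by
  induction n with
  | zero => rw [accumulate_zero_nat]; exact hs 0
  | succ n ih => rw [accumulate_succ]; exact hI.2.2 _ _ ih (hs _)

/-- The separator collects the points that appear in some `g k` before they appear in any
`f k`. -/
lemma IsIdealOn.exists_separates_range {I : Set (Set ℕ)} (hI : IsIdealOn I) (f g : ℕ → Set ℕ)
    (h : ∀ m n, f m ∩ g n ∈ I) : ∃ C, ISeparates I (range f) (range g) C := by
  refine ⟨⋃ n, accumulate g n \ accumulate f n, ?_, ?_⟩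
  · rintro _ ⟨m, rfl⟩
    refine hI.2.1 _ _ ?_ (hI.accumulate_mem (h m) m)
    rintro e ⟨hfe, hCe⟩
    obtain ⟨n, hge, hfe'⟩ := mem_iUnion.1 hCe
    obtain ⟨k, hkn, hgk⟩ := mem_accumulate.1 hge
    have hnm : n < m := lt_of_not_ge fun hmn => hfe' (mem_accumulate.2 ⟨m, hmn, hfe⟩)
    exact mem_accumulate.2 ⟨k, by omega, hfe, hgk⟩
  · rintro _ ⟨n, rfl⟩
    refine hI.2.1 _ _ ?_ (hI.accumulate_mem (fun k => h k n) n)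
    rintro e ⟨hge, hCe⟩
    have hfe : e ∈ accumulate f n := by
      by_contra hfe
      exact hCe (mem_iUnion.2 ⟨n, subset_accumulate hge, hfe⟩)
    obtain ⟨k, hkn, hfk⟩ := mem_accumulate.1 hfe
    exact mem_accumulate.2 ⟨k, hkn, hfk, hge⟩

lemma IsIdealOn.exists_separates_of_countable {I A B : Set (Set ℕ)} (hI : IsIdealOn I)
    (hA : A.Countable) (hB : B.Countable) (h : IOrthogonal I A B) : ∃ C, ISeparates I A B C := by
  obtain ⟨f, hf⟩ := (hA.insert ∅).exists_eq_range (insert_nonempty _ _)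
  obtain ⟨g, hg⟩ := (hB.insert ∅).exists_eq_range (insert_nonempty _ _)
  have hfg : ∀ m n, f m ∩ g n ∈ I := by
    intro m n
    have hm : f m ∈ insert ∅ A := hf ▸ mem_range_self m
    have hn : g n ∈ insert ∅ B := hg ▸ mem_range_self n
    rcases hm with hm | hm
    · rw [hm, empty_inter]; exact hI.1 _ finite_empty
    rcases hn with hn | hn
    · rw [hn, inter_empty]; exact hI.1 _ finite_empty
    exact h _ hm _ hn
  obtain ⟨C, hCf, hCg⟩ := hI.exists_separates_range f g hfg
  exact ⟨C, fun s hs => hCf s (hf ▸ mem_insert_of_mem _ hs),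
    fun t ht => hCg t (hg ▸ mem_insert_of_mem _ ht)⟩

lemma IsIdealOn.aleph_one_le_of_hasOmegaGap {I : Set (Set ℕ)} (hI : IsIdealOn I) {lam : Cardinal}
    (h : HasOmegaGap I lam) : ℵ₁ ≤ lam := by
  obtain ⟨A, B, ⟨horth, hsep⟩, hA, hB⟩ := h
  by_contra! hlt
  have hAc : A.Countable := le_aleph0_iff_set_countable.1 hA.le
  have hBc : B.Countable := le_aleph0_iff_set_countable.1 (hB ▸ lt_aleph_one_iff.1 hlt)
  obtain ⟨C, hC⟩ := hI.exists_separates_of_countable hAc hBc horth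
  exact hsep C hC

lemma mem_EDfin_iff {x : Set ℕ} : x ∈ EDfin ↔ ∃ K : ℕ, ∀ i, (x ∩ edA i).ncard ≤ K := by
  simp only [EDfin, edPhi, mem_ofPred_eq]
  constructor
  · rintro ⟨K, hK⟩
    exact ⟨⌈K⌉₊, fun i => by exact_mod_cast (hK i).trans (Nat.le_ceil K)⟩
  · rintro ⟨K, hK⟩
    exact ⟨K, fun i => by exact_mod_cast hK i⟩

lemma isIdealOn_EDfin : IsIdealOn EDfin := by
  refine ⟨fun x hx => ?_, fun x y hxy hy => ?_, fun x y hx hy => ?_⟩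
  · exact mem_EDfin_iff.2 ⟨x.ncard, fun i => ncard_le_ncard inter_subset_left hx⟩
  · obtain ⟨K, hK⟩ := mem_EDfin_iff.1 hy
    exact mem_EDfin_iff.2 ⟨K, fun i =>
      (ncard_le_ncard (inter_subset_inter_left _ hxy) ((finite_Ico _ _).inter_of_right _)).trans
        (hK i)⟩
  · obtain ⟨K, hK⟩ := mem_EDfin_iff.1 hx
    obtain ⟨M, hM⟩ := mem_EDfin_iff.1 hy
    refine mem_EDfin_iff.2 ⟨K + M, fun i => ?_⟩
    rw [union_inter_distrib_right]
    exact (ncard_union_le _ _).trans (Nat.add_le_add (hK i) (hM i))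

lemma pairwise_disjoint_edA : Pairwise (Function.onFun Disjoint edA) := by
  have hmono : Monotone fun i : ℕ => i * (i + 1) / 2 :=
    fun a b h => Nat.div_le_div_right (Nat.mul_le_mul h (by omega))
  have hedA : ∀ i, edA i = Ico (i * (i + 1) / 2) ((i + 1) * (i + 1 + 1) / 2) := by
    intro i
    have h : (i + 1) * (i + 1 + 1) = i * (i + 1) + 2 * (i + 1) := by ring
    simp only [edA, h]
    congr 1
    omega
  rw [funext hedA]
  simpa only [Order.succ_eq_add_one] using hmono.pairwise_disjoint_on_Ico_succ

lemma eq_of_mem_edA {e i j : ℕ} (hi : e ∈ edA i) (hj : e ∈ edA j) : i = j := by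
  by_contra hij
  exact disjoint_left.1 (pairwise_disjoint_edA hij) hi hj

/-- The `j`-th point of the block `a_(2^p - 1)`, read as node `j` of the binary tree of height `p`
in heap numbering (see `heapIndex`). -/
def blockPt (p j : ℕ) : ℕ := (2 ^ p - 1) * 2 ^ p / 2 + j

lemma blockPt_mem_edA {p j : ℕ} (hj : j < 2 ^ p) : blockPt p j ∈ edA (2 ^ p - 1) := by
  rw [edA, blockPt, Nat.sub_add_cancel Nat.one_le_two_pow]
  exact ⟨by omega, by omega⟩

lemma blockPt_inj {p p' j j' : ℕ} (hj : j < 2 ^ p) (hj' : j' < 2 ^ p')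
    (h : blockPt p j = blockPt p' j') : p = p' ∧ j = j' := by
  have hblock := eq_of_mem_edA (blockPt_mem_edA hj) (h ▸ blockPt_mem_edA hj')
  have hpow : 2 ^ p = 2 ^ p' := by
    have := @Nat.one_le_two_pow p
    have := @Nat.one_le_two_pow p'
    omega
  obtain rfl : p = p' := Nat.pow_right_injective le_rfl hpow
  exact ⟨rfl, by simpa [blockPt] using h⟩

lemma log_eq_of_blockPt_mem_edA {p j i : ℕ} (hj : j < 2 ^ p) (h : blockPt p j ∈ edA i) :
    Nat.log 2 (i + 1) = p := by
  rw [← eq_of_mem_edA (blockPt_mem_edA hj) h, Nat.sub_add_cancel Nat.one_le_two_pow,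
    Nat.log_pow one_lt_two]

def heapIndex (z : ℕ → Bool) : ℕ → ℕ
  | 0 => 1
  | r + 1 => 2 * heapIndex z r + (z r).toNat

lemma heapIndex_mem_Ico (z : ℕ → Bool) (r : ℕ) : heapIndex z r ∈ Ico (2 ^ r) (2 ^ (r + 1)) := by
  induction r with
  | zero => simp [heapIndex]
  | succ r ih =>
    have := Bool.toNat_le (z r)
    simp only [mem_Ico, heapIndex, pow_succ] at ih ⊢
    omega

lemma log_heapIndex (z : ℕ → Bool) (r : ℕ) : Nat.log 2 (heapIndex z r) = r :=
  Nat.log_eq_of_pow_le_of_lt_pow (heapIndex_mem_Ico z r).1 (heapIndex_mem_Ico z r).2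

lemma heapIndex_lt_two_pow {z : ℕ → Bool} {r p : ℕ} (h : r < p) : heapIndex z r < 2 ^ p :=
  (heapIndex_mem_Ico z r).2.trans_le (Nat.pow_le_pow_right two_pos h)

lemma heapIndex_eq_heapIndex_iff {z z' : ℕ → Bool} {r : ℕ} :
    heapIndex z r = heapIndex z' r ↔ ∀ i < r, z i = z' i := by
  induction r with
  | zero => simp [heapIndex]
  | succ r ih =>
    rw [Nat.forall_lt_succ_right, ← ih, heapIndex, heapIndex]
    cases z r <;> cases z' r <;> simp <;> omega

def edLastLevels (n : ℕ) : Set ℕ := {e | ∃ p j, j < 2 ^ p ∧ 2 ^ p ≤ j * 2 ^ n ∧ e = blockPt p j}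

def edBranch (z : ℕ → Bool) : Set ℕ := {e | ∃ p r, r < p ∧ e = blockPt p (heapIndex z r)}

lemma blockPt_mem_edLastLevels_iff {p j n : ℕ} (hj : j < 2 ^ p) :
    blockPt p j ∈ edLastLevels n ↔ 2 ^ p ≤ j * 2 ^ n := by
  constructor
  · rintro ⟨p', j', hj', hle, heq⟩
    obtain ⟨rfl, rfl⟩ := blockPt_inj hj hj' heq
    exact hle
  · exact fun h => ⟨p, j, hj, h, rfl⟩

lemma blockPt_heapIndex_mem_edLastLevels {z : ℕ → Bool} {r p : ℕ} (h : r < p) :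
    blockPt p (heapIndex z r) ∈ edLastLevels (p - r) := by
  rw [blockPt_mem_edLastLevels_iff (heapIndex_lt_two_pow h)]
  calc 2 ^ p = 2 ^ r * 2 ^ (p - r) := by rw [← pow_add, Nat.add_sub_cancel' h.le]
    _ ≤ heapIndex z r * 2 ^ (p - r) := Nat.mul_le_mul_right _ (heapIndex_mem_Ico z r).1

lemma lt_add_of_blockPt_heapIndex_mem_edLastLevels {z : ℕ → Bool} {r p n : ℕ} (h : r < p)
    (hmem : blockPt p (heapIndex z r) ∈ edLastLevels n) : p < r + 1 + n := by
  rw [blockPt_mem_edLastLevels_iff (heapIndex_lt_two_pow h)] at hmem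
  have hlt : heapIndex z r * 2 ^ n < 2 ^ (r + 1 + n) := by
    rw [pow_add]
    exact Nat.mul_lt_mul_of_pos_right (heapIndex_mem_Ico z r).2 (by positivity)
  exact (Nat.pow_lt_pow_iff_right one_lt_two).1 (hmem.trans_lt hlt)

lemma ncard_edLastLevels_inter_edBranch_inter_edA_le (n : ℕ) (z : ℕ → Bool) (i : ℕ) :
    ((edLastLevels n ∩ edBranch z) ∩ edA i).ncard ≤ n := by
  set p := Nat.log 2 (i + 1)
  have hsub : (edLastLevels n ∩ edBranch z) ∩ edA i ⊆
      (fun r => blockPt p (heapIndex z r)) '' ↑(Finset.Ico (p - n) p) := by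
    rintro _ ⟨⟨hA, p', r, hrp, rfl⟩, hi⟩
    obtain rfl : p' = p := (log_eq_of_blockPt_mem_edA (heapIndex_lt_two_pow hrp) hi).symm
    have := lt_add_of_blockPt_heapIndex_mem_edLastLevels hrp hA
    exact ⟨r, by simp only [Finset.coe_Ico, mem_Ico]; omega, rfl⟩
  calc _ ≤ _ := ncard_le_ncard hsub ((Finset.finite_toSet _).image _)
    _ ≤ (↑(Finset.Ico (p - n) p) : Set ℕ).ncard := ncard_image_le (Finset.finite_toSet _)
    _ ≤ n := by rw [ncard_coe_finset, Nat.card_Ico]; omega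

lemma iOrthogonal_edLastLevels_edBranch (S : Set (ℕ → Bool)) :
    IOrthogonal EDfin (range edLastLevels) (edBranch '' S) := by
  rintro _ ⟨n, rfl⟩ _ ⟨z, -, rfl⟩
  exact mem_EDfin_iff.2 ⟨n, ncard_edLastLevels_inter_edBranch_inter_edA_le n z⟩

lemma edLastLevels_strictMono : StrictMono edLastLevels := by
  refine strictMono_nat_of_lt_succ fun n => ssubset_iff_subset_ne.2 ⟨?_, fun heq => ?_⟩
  · rintro _ ⟨p, j, hj, hle, rfl⟩
    exact ⟨p, j, hj, hle.trans (Nat.mul_le_mul_left _ (Nat.pow_le_pow_right two_pos n.le_succ)),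
      rfl⟩
  · have hj : 1 < 2 ^ (n + 1) := Nat.one_lt_two_pow n.succ_ne_zero
    have hmem : blockPt (n + 1) 1 ∈ edLastLevels (n + 1) :=
      (blockPt_mem_edLastLevels_iff hj).2 (by simp)
    rw [← heq, blockPt_mem_edLastLevels_iff hj, one_mul] at hmem
    exact absurd (Nat.pow_le_pow_iff_right one_lt_two |>.1 hmem) (by omega)

lemma edBranch_injective : Function.Injective edBranch := by
  intro z z' h
  by_contra hne
  obtain ⟨i, hi⟩ := Function.ne_iff.1 hne
  have hmem : blockPt (i + 2) (heapIndex z (i + 1)) ∈ edBranch z' :=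
    h ▸ ⟨i + 2, i + 1, by omega, rfl⟩
  obtain ⟨p, r, hrp, heq⟩ := hmem
  obtain ⟨rfl, hidx⟩ := blockPt_inj (heapIndex_lt_two_pow (by omega)) (heapIndex_lt_two_pow hrp) heq
  have hr : i + 1 = r := by simpa only [log_heapIndex] using congrArg (Nat.log 2) hidx
  subst hr
  exact hi (heapIndex_eq_heapIndex_iff.1 hidx i (by omega))

lemma Finset.exists_eq_of_forall_lt_eq {β : Type*} (F : Finset (ℕ → β)) :
    ∃ r, ∀ z ∈ F, ∀ z' ∈ F, (∀ i < r, z i = z' i) → z = z' := by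
  classical
  choose! d hd using fun z z' : ℕ → β => (Function.ne_iff.1 : z ≠ z' → ∃ i, z i ≠ z' i)
  obtain ⟨M, hM⟩ := ((F ×ˢ F).image fun q => d q.1 q.2).exists_le
  refine ⟨M + 1, fun z hz z' hz' h => ?_⟩
  by_contra hne
  have hdM : d z z' ≤ M := hM _
    (Finset.mem_image.2 ⟨(z, z'), Finset.mem_product.2 ⟨hz, hz'⟩, rfl⟩)
  exact hd z z' hne (h _ (Nat.lt_succ_of_le hdM))

lemma exists_blockPt_heapIndex_mem_of_ncard_le {z : ℕ → Bool} {C : Set ℕ} {P L : ℕ}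
    (R : Finset ℕ) (hR : ∀ ℓ ∈ R, ℓ < P) (hL : L < R.card)
    (h : ((edBranch z \ C) ∩ edA (2 ^ P - 1)).ncard ≤ L) :
    ∃ ℓ ∈ R, blockPt P (heapIndex z ℓ) ∈ C := by
  by_contra! hout
  have hmaps : ∀ ℓ ∈ (R : Set ℕ), blockPt P (heapIndex z ℓ) ∈ (edBranch z \ C) ∩ edA (2 ^ P - 1) :=
    fun ℓ hℓ => ⟨⟨⟨P, ℓ, hR ℓ hℓ, rfl⟩, hout ℓ hℓ⟩,
      blockPt_mem_edA (heapIndex_lt_two_pow (hR ℓ hℓ))⟩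
  have hinj : InjOn (fun ℓ => blockPt P (heapIndex z ℓ)) R := fun ℓ hℓ ℓ' hℓ' heq => by
    have hidx := (blockPt_inj (heapIndex_lt_two_pow (hR ℓ hℓ))
      (heapIndex_lt_two_pow (hR ℓ' hℓ')) heq).2
    simpa only [log_heapIndex] using congrArg (Nat.log 2) hidx
  have := ncard_le_ncard_of_injOn _ hmaps hinj ((finite_Ico _ _).inter_of_right _)
  rw [ncard_coe_finset] at this
  omega

lemma card_filter_blockPt_heapIndex_mem_le {F : Finset (ℕ → Bool)} {ℓ P : ℕ}
    {C : Set ℕ} [DecidablePred (· ∈ C)]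
    (hF : ∀ z ∈ F, ∀ z' ∈ F, (∀ i < ℓ, z i = z' i) → z = z') (hℓ : ℓ < P) :
    (F.filter fun z => blockPt P (heapIndex z ℓ) ∈ C).card ≤
      ((edLastLevels (P - ℓ) ∩ C) ∩ edA (2 ^ P - 1)).ncard := by
  rw [← ncard_coe_finset]
  refine ncard_le_ncard_of_injOn (fun z => blockPt P (heapIndex z ℓ)) ?_ ?_
    ((finite_Ico _ _).inter_of_right _)
  · intro z hz
    rw [Finset.coe_filter] at hz
    exact ⟨⟨blockPt_heapIndex_mem_edLastLevels hℓ, hz.2⟩,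
      blockPt_mem_edA (heapIndex_lt_two_pow hℓ)⟩
  · intro z hz z' hz' heq
    rw [Finset.coe_filter] at hz hz'
    have hidx := (blockPt_inj (heapIndex_lt_two_pow hℓ) (heapIndex_lt_two_pow hℓ) heq).2
    exact hF z hz.1 z' hz'.1 (heapIndex_eq_heapIndex_iff.1 hidx)

lemma not_separates_edLastLevels_edBranch {S : Set (ℕ → Bool)} (hS : ¬ S.Countable) (C : Set ℕ) :
    ¬ ISeparates EDfin (range edLastLevels) (edBranch '' S) C := by
  rintro ⟨hA, hB⟩
  choose K hK using fun n => mem_EDfin_iff.1 (hA _ (mem_range_self n))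
  obtain ⟨L, hL⟩ : ∃ L, {z ∈ S | ∀ i, ((edBranch z \ C) ∩ edA i).ncard ≤ L}.Infinite := by
    by_contra! hfin
    refine hS ((countable_iUnion fun L => (hfin L).countable).mono fun z hz => ?_)
    obtain ⟨L, hL⟩ := mem_EDfin_iff.1 (hB _ (mem_image_of_mem _ hz))
    exact mem_iUnion.2 ⟨L, hz, hL⟩
  set M := (Finset.range (L + 2)).sup K
  obtain ⟨F, hFS, hFcard⟩ := hL.exists_subset_card_eq ((L + 1) * M + 1)
  obtain ⟨r, hr⟩ := F.exists_eq_of_forall_lt_eq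
  set P := r + L + 1
  classical
  have hcover : F ⊆ (Finset.Ico r P).biUnion
      fun ℓ => F.filter fun z => blockPt P (heapIndex z ℓ) ∈ C := by
    intro z hz
    obtain ⟨ℓ, hℓ, hzC⟩ := exists_blockPt_heapIndex_mem_of_ncard_le (Finset.Ico r P)
      (fun ℓ hℓ => (Finset.mem_Ico.1 hℓ).2) (by rw [Nat.card_Ico]; omega) ((hFS hz).2 _)
    exact Finset.mem_biUnion.2 ⟨ℓ, hℓ, Finset.mem_filter.2 ⟨hz, hzC⟩⟩
  have hfew : ∀ ℓ ∈ Finset.Ico r P, (F.filter fun z => blockPt P (heapIndex z ℓ) ∈ C).card ≤ M := by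
    intro ℓ hℓ
    rw [Finset.mem_Ico] at hℓ
    calc _ ≤ _ := card_filter_blockPt_heapIndex_mem_le
          (fun z hz z' hz' h => hr z hz z' hz' fun i hi => h i (by omega)) hℓ.2
      _ ≤ K (P - ℓ) := hK _ _
      _ ≤ M := Finset.le_sup (Finset.mem_range.2 (by omega))
  have := (Finset.card_le_card hcover).trans
    (Finset.card_biUnion_le.trans (Finset.sum_le_card_nsmul _ _ _ hfew))
  rw [Nat.card_Ico, smul_eq_mul, hFcard, show P - r = L + 1 by omega] at this
  omega

lemma hasOmegaGap_EDfin_aleph_one : HasOmegaGap EDfin ℵ₁ := by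
  obtain ⟨S, hS⟩ : ∃ S : Set (ℕ → Bool), #S = ℵ₁ :=
    le_mk_iff_exists_set.1 (by simpa using aleph_one_le_continuum)
  have hSc : ¬ S.Countable := by
    rw [← le_aleph0_iff_set_countable, hS, not_le]
    exact aleph0_lt_aleph_one
  refine ⟨range edLastLevels, edBranch '' S,
    ⟨iOrthogonal_edLastLevels_edBranch S, not_separates_edLastLevels_edBranch hSc⟩, ?_, ?_⟩
  · rw [mk_range_eq _ edLastLevels_strictMono.injective, mk_nat]
  · rw [mk_image_eq edBranch_injective, hS]

/-- The Rothberger number of `ED_fin` equals `ℵ₁`: there is an `ED_fin`-(ω,ω₁)-gap,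
and `ω₁` is least among cardinals `λ` admitting an `ED_fin`-(ω,λ)-gap. -/
theorem rothberger_EDfin_eq_aleph_one :
    HasOmegaGap EDfin (aleph 1) ∧
    ∀ lam : Cardinal, HasOmegaGap EDfin lam → aleph 1 ≤ lam :=
  ⟨hasOmegaGap_EDfin_aleph_one, fun _ => isIdealOn_EDfin.aleph_one_le_of_hasOmegaGap⟩
end

section
/- Let g : ω → ω∖{0}, let {a_i : i < ω} be a partition of ω into nonempty finite sets, and let I = I⟨a_i,φ_i⟩ be the fragmented ideal with submeasures φ_i(x) = |x|/g(i). If I is non-trivial, i.e. the sequence of reals {|a_i|/g(i) : i < ω} is unbounded, then the Rothberger number 𝔟(I) equals ℵ₁. In particular, the linear growth ideal I_L (where |a_i| = 2^i and g(i) = i+1) has Rothberger number ℵ₁. -/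
open Set Filter Cardinal

/-!
Every ideal has `𝔟(I) ≥ ℵ₁`: an orthogonal pair of countable families `sₘ`, `tₙ` is separated by
`⋃ₙ (tₙ \ ⋃_{k ≤ n} sₖ)`.

For an `(ω, ℵ₁)`-gap, choose pieces `a_{i_t}` with room for `t · 2^t` cells of `g(i_t)` points
each, the cells of column `t` being indexed by a row `u < t` and a label `w : Fin t → Bool`.
Let `Aₙ` be the union of the cells in the rows below `n`, and `B_r`, for `r` in a set of `ℵ₁`
branches `ℕ → Bool`, the union of the cells labelled by the restriction of `r`. Then `Aₙ ∩ B_r`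
has `n` cells in every column, so it lies in `I`. If `C` separated the pair, infinitely many `r`
would share one bound `k` on `(B_r \ C) ∩ a_i` in units of `g(i)`, while `A_{k+1} ∩ C` has some
bound `M`. In a column where `M + 1` of these `r` have distinct labels, the `k + 1` cells of each
`B_r` below row `k + 1` meet `C` in at least `g(i)` points, so `A_{k+1} ∩ C` has at least
`(M + 1) · g(i)` points there.
-/

open Function

namespace IsIdealOn

variable {I : Set (Set ℕ)}

theorem empty_mem (hI : IsIdealOn I) : ∅ ∈ I := hI.1 ∅ finite_empty

theorem mem_of_subset (hI : IsIdealOn I) {x y : Set ℕ} (hxy : x ⊆ y) (hy : y ∈ I) : x ∈ I :=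
  hI.2.1 x y hxy hy

theorem union_mem (hI : IsIdealOn I) {x y : Set ℕ} (hx : x ∈ I) (hy : y ∈ I) : x ∪ y ∈ I :=
  hI.2.2 x y hx hy

theorem biUnion_finset_mem {ι : Type*} (hI : IsIdealOn I) (s : Finset ι) {f : ι → Set ℕ}
    (hf : ∀ i ∈ s, f i ∈ I) : ⋃ i ∈ s, f i ∈ I := by
  classical
  induction s using Finset.induction_on with
  | empty => simpa using hI.empty_mem
  | insert i s _ ih =>
    rw [Finset.set_biUnion_insert]
    exact hI.union_mem (hf i (s.mem_insert_self i))
      (ih fun j hj => hf j (Finset.mem_insert_of_mem hj))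

theorem exists_separates_range_s1 (hI : IsIdealOn I) {s t : ℕ → Set ℕ}
    (horth : ∀ m n, s m ∩ t n ∈ I) : ∃ C, ISeparates I (range s) (range t) C := by
  refine ⟨⋃ n, t n \ ⋃ k ∈ Finset.range (n + 1), s k, ?_, ?_⟩
  · rintro _ ⟨m, rfl⟩
    refine hI.mem_of_subset ?_ (hI.biUnion_finset_mem (Finset.range m) fun n _ => horth m n)
    rintro x ⟨hxs, hxC⟩
    obtain ⟨n, hxt, hxs'⟩ := mem_iUnion.1 hxC
    have hnm : n < m := by
      by_contra! hmn
      exact hxs' (mem_biUnion (Finset.mem_range.2 (Nat.lt_succ_of_le hmn)) hxs)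
    exact mem_biUnion (Finset.mem_range.2 hnm) ⟨hxs, hxt⟩
  · rintro _ ⟨n, rfl⟩
    refine hI.mem_of_subset ?_
      (hI.biUnion_finset_mem (Finset.range (n + 1)) fun k _ => horth k n)
    intro x ⟨hxt, hxC⟩
    have hxs : x ∈ ⋃ k ∈ Finset.range (n + 1), s k := by
      by_contra hxs
      exact hxC (mem_iUnion.2 ⟨n, hxt, hxs⟩)
    obtain ⟨k, hk, hxk⟩ := mem_iUnion₂.1 hxs
    exact mem_biUnion hk ⟨hxk, hxt⟩

theorem exists_separates_of_countable_s1 (hI : IsIdealOn I) {A B : Set (Set ℕ)}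
    (hA : A.Countable) (hB : B.Countable) (horth : IOrthogonal I A B) :
    ∃ C, ISeparates I A B C := by
  rcases A.eq_empty_or_nonempty with rfl | hA₀
  · exact ⟨univ, by simp [ISeparates, hI.empty_mem]⟩
  rcases B.eq_empty_or_nonempty with rfl | hB₀
  · exact ⟨∅, by simp [ISeparates, hI.empty_mem]⟩
  obtain ⟨s, rfl⟩ := hA.exists_eq_range hA₀
  obtain ⟨t, rfl⟩ := hB.exists_eq_range hB₀
  exact hI.exists_separates_range_s1 fun m n => horth _ (mem_range_self m) _ (mem_range_self n)

theorem aleph_one_le_of_hasOmegaGap_s1 (hI : IsIdealOn I) {lam : Cardinal}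
    (h : HasOmegaGap I lam) : ℵ₁ ≤ lam := by
  obtain ⟨A, B, ⟨horth, hnosep⟩, hA, hB⟩ := h
  by_contra! hlt
  have hAc : A.Countable := le_aleph0_iff_set_countable.1 hA.le
  have hBc : B.Countable := le_aleph0_iff_set_countable.1 (hB ▸ lt_aleph_one_iff.1 hlt)
  obtain ⟨C, hC⟩ := hI.exists_separates_of_countable_s1 hAc hBc horth
  exact hnosep C hC

end IsIdealOn

namespace IsFragmentation

variable {I : Set (Set ℕ)} {a : ℕ → Set ℕ} {φ : ℕ → Set ℕ → ℝ}

theorem isIdealOn (h : IsFragmentation I a φ) : IsIdealOn I := by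
  obtain ⟨⟨-, -, hdisj, hcover⟩, hφ, hmem⟩ := h
  have hmono : ∀ x y : Set ℕ, x ⊆ y → y ∈ I → x ∈ I := fun x y hxy hy => by
    obtain ⟨K, hK⟩ := (hmem y).1 hy
    exact (hmem x).2 ⟨K, fun i =>
      ((hφ i).2.2.1 _ _ (inter_subset_inter_left _ hxy) inter_subset_right).trans (hK i)⟩
  have hunion : ∀ x y : Set ℕ, x ∈ I → y ∈ I → x ∪ y ∈ I := fun x y hx hy => by
    obtain ⟨K, hK⟩ := (hmem x).1 hx
    obtain ⟨L, hL⟩ := (hmem y).1 hy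
    refine (hmem _).2 ⟨K + L, fun i => ?_⟩
    rw [union_inter_distrib_right]
    exact ((hφ i).2.2.2 _ _ inter_subset_right inter_subset_right).trans (add_le_add (hK i) (hL i))
  have hsingleton : ∀ n, {n} ∈ I := fun n => by
    obtain ⟨j, hj⟩ := mem_iUnion.1 (hcover ▸ mem_univ n)
    refine (hmem _).2 ⟨φ j ({n} ∩ a j), fun i => ?_⟩
    rcases eq_or_ne i j with rfl | hij
    · exact le_rfl
    · rw [singleton_inter_eq_empty.2 fun hi => (hdisj i j hij).notMem_of_mem_left hi hj, (hφ i).1]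
      exact (hφ j).2.1 _ inter_subset_right
  refine ⟨fun x hx => ?_, hmono, hunion⟩
  induction x, hx using Finite.induction_on with
  | empty => exact (hmem ∅).2 ⟨0, fun i => by simp [(hφ i).1]⟩
  | @insert n x _ _ ih => exact insert_eq n x ▸ hunion _ _ (hsingleton n) ih

theorem mem_iff_exists_ncard_le {g : ℕ → ℕ} (hg : ∀ i, 0 < g i)
    (h : IsFragmentation I a fun i x => (x.ncard : ℝ) / g i) (x : Set ℕ) :
    x ∈ I ↔ ∃ K : ℕ, ∀ i, (x ∩ a i).ncard ≤ K * g i := by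
  have hg' : ∀ i, (0 : ℝ) < g i := fun i => by exact_mod_cast hg i
  refine (h.2.2 x).trans ⟨fun ⟨K, hK⟩ => ⟨⌈K⌉₊, fun i => ?_⟩, fun ⟨K, hK⟩ => ⟨K, fun i => ?_⟩⟩
  · have := ((div_le_iff₀ (hg' i)).1 (hK i)).trans
      (mul_le_mul_of_nonneg_right (Nat.le_ceil K) (hg' i).le)
    exact_mod_cast this
  · exact (div_le_iff₀ (hg' i)).2 (by exact_mod_cast hK i)

end IsFragmentation

theorem frequently_lt_of_not_bddAbove {α : Type*} [LinearOrder α] {f : ℕ → α}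
    (hf : ¬BddAbove (range f)) (K : α) : ∃ᶠ i in atTop, K < f i := by
  contrapose! hf
  exact (isBoundedUnder_of_eventually_le hf).bddAbove_range

theorem frequently_mul_le_of_unbounded_ratio {n d : ℕ → ℕ} (hd : ∀ i, 0 < d i)
    (h : ∀ K : ℝ, ∃ i, K < (n i : ℝ) / d i) (N : ℕ) : ∃ᶠ i in atTop, N * d i ≤ n i := by
  have hunbdd : ¬BddAbove (range fun i => (n i : ℝ) / d i) :=
    not_bddAbove_iff.2 fun K => let ⟨i, hi⟩ := h K; ⟨_, mem_range_self i, hi⟩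
  refine (frequently_lt_of_not_bddAbove hunbdd N).mono fun i hi => ?_
  exact_mod_cast ((lt_div_iff₀ (by exact_mod_cast hd i)).1 hi).le

theorem Set.Finite.exists_injective_mem {α : Type} [Finite α] {s : Set ℕ} (hs : s.Finite)
    (h : Nat.card α ≤ s.ncard) : ∃ f : α → ℕ, Injective f ∧ ∀ x, f x ∈ s := by
  have := hs.to_subtype
  have hcard : #α ≤ #s := by
    rw [← Nat.cast_card, ← Nat.cast_card, Nat.card_coe_set_eq]
    exact_mod_cast h
  obtain ⟨f⟩ := (le_def α s).1 hcard
  exact ⟨fun x => f x, Subtype.val_injective.comp f.injective, fun x => (f x).2⟩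

theorem Set.exists_infinite_fiber_of_not_countable {α : Type*} {S : Set α} (hS : ¬S.Countable)
    (f : α → ℕ) : ∃ k, {r ∈ S | f r = k}.Infinite := by
  by_contra! h
  refine hS ((countable_iUnion fun k => (h k).countable).mono fun r hr => ?_)
  exact mem_iUnion.2 ⟨f r, hr, rfl⟩

theorem Set.Finite.eventually_injOn_restrict {β : Type*} {T : Set (ℕ → β)} (hT : T.Finite) :
    ∀ᶠ t in atTop, InjOn (fun (r : ℕ → β) (i : Fin t) => r i) T := by
  have hpair : ∀ r ∈ T, ∀ r' ∈ T,
      ∀ᶠ t in atTop, (fun i : Fin t => r i) = (fun i : Fin t => r' i) → r = r' := by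
    intro r _ r' _
    by_cases hrr : r = r'
    · exact .of_forall fun _ _ => hrr
    obtain ⟨n, hn⟩ := Function.ne_iff.1 hrr
    exact (eventually_gt_atTop n).mono fun t hnt heq => absurd (congrFun heq ⟨n, hnt⟩) hn
  filter_upwards [(eventually_all_finite hT).2 fun r hr =>
    (eventually_all_finite hT).2 (hpair r hr)] with t ht r hr r' hr' using ht r hr r' hr'

/-- Column `t` of the grid: a point `(w, u, j)` is the `j`-th point of the cell with label `w` in
row `u`. -/
abbrev GridBox (t G : ℕ) : Type := (Fin t → Bool) × Fin t × Fin G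

namespace GridBox

def rowsBelow (t G n : ℕ) : Set (GridBox t G) := {p | (p.2.1 : ℕ) < n}

def branch (t G : ℕ) (r : ℕ → Bool) : Set (GridBox t G) := {p | p.1 = fun i : Fin t => r i}

section

variable {t G : ℕ}

theorem ncard_rowsBelow_inter_branch (n : ℕ) (r : ℕ → Bool) :
    (rowsBelow t G n ∩ branch t G r).ncard = min t n * G := by
  have hprod : rowsBelow t G n ∩ branch t G r =
      ({fun i : Fin t => r i} : Set (Fin t → Bool)) ×ˢ ({u : Fin t | (u : ℕ) < n} ×ˢ Set.univ) := by
    ext ⟨ℓ, u, j⟩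
    simp [rowsBelow, branch, and_comm]
  have hrows : {u : Fin t | (u : ℕ) < n}.ncard = min t n := by
    rw [← Fin.card_filter_val_lt, ← Finset.coe_filter_univ, ncard_coe_finset]
  rw [hprod, ncard_prod, ncard_prod, ncard_singleton, hrows, ncard_univ, Nat.card_eq_fintype_card,
    Fintype.card_fin, one_mul]

theorem card_mul_le_ncard_rowsBelow_inter {k : ℕ} (hkt : k < t) (c : Set (GridBox t G))
    (T : Finset (ℕ → Bool)) (hT : InjOn (fun (r : ℕ → Bool) (i : Fin t) => r i) T)
    (hbranch : ∀ r ∈ T, (branch t G r \ c).ncard ≤ k * G) :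
    T.card * G ≤ (rowsBelow t G (k + 1) ∩ c).ncard := by
  set X : (ℕ → Bool) → Set (GridBox t G) := fun r => rowsBelow t G (k + 1) ∩ branch t G r ∩ c
  have hX : ∀ r ∈ T, G ≤ (X r).ncard := fun r hr => by
    have hcover : rowsBelow t G (k + 1) ∩ branch t G r ⊆ X r ∪ (branch t G r \ c) :=
      fun p hp => (em (p ∈ c)).imp (fun hc => ⟨hp, hc⟩) fun hc => ⟨hp.2, hc⟩
    have := (ncard_le_ncard hcover).trans (ncard_union_le _ _)
    rw [ncard_rowsBelow_inter_branch, min_eq_right hkt, add_mul, one_mul] at this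
    linarith [hbranch r hr]
  have hdisj : (T : Set (ℕ → Bool)).PairwiseDisjoint X := fun r hr r' hr' hne =>
    disjoint_left.2 fun p hp hp' => hne (hT hr hr' (hp.1.2.symm.trans hp'.1.2))
  calc T.card * G ≤ ∑ r ∈ T, (X r).ncard := by simpa using T.card_nsmul_le_sum _ G hX
    _ = (⋃ r ∈ T, X r).ncard := by
      rw [← Finset.set_biUnion_coe, T.finite_toSet.ncard_biUnion (fun _ _ => toFinite _) hdisj,
        finsum_mem_coe_finset]
    _ ≤ (rowsBelow t G (k + 1) ∩ c).ncard :=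
      ncard_le_ncard (iUnion₂_subset fun r _ p hp => ⟨hp.1.1, hp.2⟩)

end

variable {G : ℕ → ℕ}

theorem rowsBelow_injective (hG : ∀ t, 0 < G t) :
    Injective fun n (t : ℕ) => rowsBelow t (G t) n := by
  intro n m h
  have hcard := congrArg (fun P => (P (n + m + 1) ∩ branch _ _ fun _ => false).ncard) h
  simp only [ncard_rowsBelow_inter_branch] at hcard
  rw [min_eq_right (by omega), min_eq_right (by omega)] at hcard
  exact Nat.eq_of_mul_eq_mul_right (hG _) hcard

theorem branch_injective (hG : ∀ t, 0 < G t) :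
    Injective fun r (t : ℕ) => branch t (G t) r := by
  intro r r' h
  funext n
  have hp : ((fun i : Fin (n + 1) => r i), Fin.last n, (⟨0, hG _⟩ : Fin (G (n + 1)))) ∈
      branch (n + 1) (G (n + 1)) r := rfl
  rw [show branch (n + 1) (G (n + 1)) r = branch (n + 1) (G (n + 1)) r' from congrFun h (n + 1)]
    at hp
  exact congrFun hp (Fin.last n)

end GridBox

section Grid

open GridBox

variable {G : ℕ → ℕ}

def gridSet (e : ∀ t, GridBox t (G t) → ℕ) (P : ∀ t, Set (GridBox t (G t))) : Set ℕ :=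
  ⋃ t, e t '' P t

variable {e : ∀ t, GridBox t (G t) → ℕ} {col : ℕ → Set ℕ} {I : Set (Set ℕ)}

theorem gridSet_inter (P : ∀ t, Set (GridBox t (G t))) (C : Set ℕ) :
    gridSet e P ∩ C = gridSet e fun t => P t ∩ e t ⁻¹' C := by
  simp only [gridSet, iUnion_inter, image_inter_preimage]

theorem gridSet_diff (P : ∀ t, Set (GridBox t (G t))) (C : Set ℕ) :
    gridSet e P \ C = gridSet e fun t => P t \ e t ⁻¹' C := by
  simp only [gridSet, iUnion_sdiff, image_sdiff_preimage]

theorem gridSet_inter_column (hcol : ∀ t p, e t p ∈ col t) (hdisj : Pairwise (Disjoint on col))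
    (P : ∀ t, Set (GridBox t (G t))) (t : ℕ) : gridSet e P ∩ col t = e t '' P t := by
  refine Subset.antisymm ?_ fun x hx => ⟨mem_iUnion.2 ⟨t, hx⟩, ?_⟩
  · rintro x ⟨hx, hxt⟩
    obtain ⟨t', p, hp, rfl⟩ := mem_iUnion.1 hx
    obtain rfl : t' = t := by
      by_contra h
      exact (hdisj h).notMem_of_mem_left (hcol t' p) hxt
    exact ⟨p, hp, rfl⟩
  · obtain ⟨p, -, rfl⟩ := hx
    exact hcol t p

theorem disjoint_gridSet (hcol : ∀ t p, e t p ∈ col t) {Y : Set ℕ} (hY : ∀ t, Disjoint (col t) Y)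
    (P : ∀ t, Set (GridBox t (G t))) : Disjoint (gridSet e P) Y := by
  simp only [gridSet, disjoint_iUnion_left]
  exact fun t => (hY t).mono_left (image_subset_iff.2 fun p _ => hcol t p)

theorem preimage_gridSet (he : ∀ t, Injective (e t)) (hcol : ∀ t p, e t p ∈ col t)
    (hdisj : Pairwise (Disjoint on col)) (P : ∀ t, Set (GridBox t (G t))) (t : ℕ) :
    e t ⁻¹' gridSet e P = P t := by
  ext p
  refine ⟨fun hp => ?_, fun hp => mem_iUnion.2 ⟨t, mem_image_of_mem _ hp⟩⟩
  have : e t p ∈ e t '' P t := gridSet_inter_column hcol hdisj P t ▸ ⟨hp, hcol t p⟩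
  exact (he t).mem_set_image.1 this

theorem gridSet_injective (he : ∀ t, Injective (e t)) (hcol : ∀ t p, e t p ∈ col t)
    (hdisj : Pairwise (Disjoint on col)) : Injective (gridSet e) := fun P Q h => funext fun t => by
  rw [← preimage_gridSet he hcol hdisj P, h, preimage_gridSet he hcol hdisj Q]

theorem gridSet_inter_gridSet (he : ∀ t, Injective (e t)) (hcol : ∀ t p, e t p ∈ col t)
    (hdisj : Pairwise (Disjoint on col)) (P Q : ∀ t, Set (GridBox t (G t))) :
    gridSet e P ∩ gridSet e Q = gridSet e fun t => P t ∩ Q t := by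
  simp only [gridSet_inter, preimage_gridSet he hcol hdisj]

theorem gridSet_mem_iff {a : ℕ → Set ℕ} {g idx : ℕ → ℕ} {e : ∀ t, GridBox t (g (idx t)) → ℕ}
    (hI : ∀ x, x ∈ I ↔ ∃ K : ℕ, ∀ i, (x ∩ a i).ncard ≤ K * g i) (he : ∀ t, Injective (e t))
    (hcol : ∀ t p, e t p ∈ a (idx t)) (ha : Pairwise (Disjoint on a)) (hidx : Injective idx)
    (P : ∀ t, Set (GridBox t (g (idx t)))) :
    gridSet e P ∈ I ↔ ∃ K : ℕ, ∀ t, (P t).ncard ≤ K * g (idx t) := by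
  have htrace : ∀ t, (gridSet e P ∩ a (idx t)).ncard = (P t).ncard := fun t => by
    rw [gridSet_inter_column hcol (ha.comp_of_injective hidx), ncard_image_of_injective _ (he t)]
  refine (hI _).trans (exists_congr fun K => ⟨fun h t => htrace t ▸ h (idx t), fun h i => ?_⟩)
  by_cases hi : ∃ t, idx t = i
  · obtain ⟨t, rfl⟩ := hi
    exact htrace t ▸ h t
  · simp only [not_exists] at hi
    rw [(disjoint_gridSet hcol (fun t => ha (hi t)) P).inter_eq, ncard_empty]
    exact Nat.zero_le _

theorem not_iSeparates_rowsBelow_branch (hG : ∀ t, 0 < G t)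
    (hI : ∀ P, gridSet e P ∈ I ↔ ∃ K : ℕ, ∀ t, (P t).ncard ≤ K * G t)
    {S : Set (ℕ → Bool)} (hS : ¬S.Countable) (C : Set ℕ) :
    ¬ISeparates I (range fun n => gridSet e fun t => rowsBelow t (G t) n)
      ((fun r => gridSet e fun t => branch t (G t) r) '' S) C := by
  rintro ⟨hA, hB⟩
  have hbound : ∀ r ∈ S, ∃ k : ℕ, ∀ t, (branch t (G t) r \ e t ⁻¹' C).ncard ≤ k * G t :=
    fun r hr => (hI _).1 (gridSet_diff _ C ▸ hB _ (mem_image_of_mem _ hr))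
  choose! k hk using hbound
  obtain ⟨k₀, hk₀⟩ := exists_infinite_fiber_of_not_countable hS k
  obtain ⟨M, hM⟩ := (hI _).1 (gridSet_inter _ C ▸ hA _ (mem_range_self (k₀ + 1)))
  obtain ⟨T, hTS, hTcard⟩ := hk₀.exists_subset_card_eq (M + 1)
  obtain ⟨t, hkt, hT⟩ :=
    ((eventually_gt_atTop k₀).and T.finite_toSet.eventually_injOn_restrict).exists
  have hcount := card_mul_le_ncard_rowsBelow_inter hkt (e t ⁻¹' C) T hT
    fun r hr => (hTS hr).2 ▸ hk r (hTS hr).1 t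
  rw [hTcard] at hcount
  linarith [hM t, hG t]

theorem hasOmegaGap_aleph_one_of_grid (he : ∀ t, Injective (e t)) (hcol : ∀ t p, e t p ∈ col t)
    (hdisj : Pairwise (Disjoint on col)) (hG : ∀ t, 0 < G t)
    (hI : ∀ P, gridSet e P ∈ I ↔ ∃ K : ℕ, ∀ t, (P t).ncard ≤ K * G t) :
    HasOmegaGap I ℵ₁ := by
  obtain ⟨S, hS⟩ : ∃ S : Set (ℕ → Bool), #S = ℵ₁ :=
    le_mk_iff_exists_set.1 (by simp [aleph0_lt_continuum])
  have hSc : ¬S.Countable := fun h => (h.le_aleph0.trans_lt aleph0_lt_aleph_one).ne hS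
  refine ⟨range fun n => gridSet e fun t => rowsBelow t (G t) n,
    (fun r => gridSet e fun t => branch t (G t) r) '' S,
    ⟨?_, not_iSeparates_rowsBelow_branch hG hI hSc⟩, ?_, ?_⟩
  · rintro _ ⟨n, rfl⟩ _ ⟨r, -, rfl⟩
    rw [gridSet_inter_gridSet he hcol hdisj]
    refine (hI _).2 ⟨n, fun t => ?_⟩
    rw [ncard_rowsBelow_inter_branch]
    exact Nat.mul_le_mul_right _ (min_le_right _ _)
  · exact (mk_range_eq _ ((gridSet_injective he hcol hdisj).comp (rowsBelow_injective hG))).trans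
      mk_nat
  · exact (mk_image_eq ((gridSet_injective he hcol hdisj).comp (branch_injective hG))).trans hS

end Grid

/-- Let `g : ω → ω ∖ {0}`, let `{a_i}` be a partition of `ω` into nonempty finite sets,
and let `I = I⟨a_i, φ_i⟩` be the fragmented ideal with submeasures `φ_i(x) = |x| / g(i)`.
If `I` is non-trivial, i.e. the sequence of reals `|a_i| / g(i)` is unbounded, then the
Rothberger number `𝔟(I)` equals `ℵ₁` (this covers in particular the linear growth
ideal `I_L`, where `|a_i| = 2^i` and `g(i) = i + 1`). -/
theorem rothberger_quotient_counting_ideal_eq_aleph_one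
    (g : ℕ → ℕ) (hg : ∀ i, 0 < g i)
    (a : ℕ → Set ℕ) (I : Set (Set ℕ))
    (hfrag : IsFragmentation I a (fun i x => (x.ncard : ℝ) / (g i : ℝ)))
    (hnontriv : ∀ K : ℝ, ∃ i, K < ((a i).ncard : ℝ) / (g i : ℝ)) :
    HasOmegaGap I (aleph 1) ∧
    ∀ lam : Cardinal, HasOmegaGap I lam → aleph 1 ≤ lam := by
  refine ⟨?_, fun _ => hfrag.isIdealOn.aleph_one_le_of_hasOmegaGap_s1⟩
  have hmem := hfrag.mem_iff_exists_ncard_le hg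
  obtain ⟨⟨-, hfin, hdisj, -⟩, -, -⟩ := hfrag
  have hroom : ∀ t, ∃ᶠ i in atTop, Nat.card (GridBox t (g i)) ≤ (a i).ncard := fun t => by
    simpa [mul_assoc] using frequently_mul_le_of_unbounded_ratio hg hnontriv (2 ^ t * t)
  obtain ⟨idx, hidx, hidx_room⟩ := extraction_forall_of_frequently hroom
  choose e he hcol using fun t => (hfin (idx t)).exists_injective_mem (hidx_room t)
  have ha : Pairwise (Disjoint on a) := fun i j hij => hdisj i j hij
  exact hasOmegaGap_aleph_one_of_grid he hcol (ha.comp_of_injective hidx.injective)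
    (fun t => hg (idx t)) (gridSet_mem_iff hmem he hcol ha hidx.injective)
end

section
/- Let I = I⟨a_j,φ_j⟩ be a fragmented ideal that is not gradually fragmented. Then there exist k < ω, a sequence ⟨C_i⟩_{i<ω} of pairwise disjoint infinite subsets of ω, and a sequence {l_i}_{i<ω} of natural numbers such that for every i < ω and every j ∈ C_i there exists a pairwise disjoint family B_j of subsets of a_j with |B_j| = l_i, with 0 < φ_j(b) ≤ k for every b ∈ B_j, and with i < φ_j(⋃B_j) ≤ i + k. -/
open Set Filter Cardinal

/-!
If gradual fragmentation fails at `k`, then for every `i` there are infinitely many fragments `a_j`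
containing a bounded number of sets of mass `≤ k` whose union has mass `> i`. Making such a family
disjoint and then minimal puts the mass of its union into `(i, i + k]`. Pigeonholing on the
bounded family sizes fixes one size `l_i` for infinitely many `j`, and these infinite sets of
fragments, one for each `i`, are then thinned out to pairwise disjoint infinite sets.
-/

def IsCrossingFamily (ψ : Set ℕ → ℝ) (s : Set ℕ) (k r : ℝ) (B : Finset (Set ℕ)) : Prop :=
  (∀ b ∈ B, b ⊆ s) ∧ (↑B : Set (Set ℕ)).Pairwise Disjoint ∧
    (∀ b ∈ B, 0 < ψ b ∧ ψ b ≤ k) ∧ r < ψ (⋃₀ (↑B : Set (Set ℕ))) ∧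
    ψ (⋃₀ (↑B : Set (Set ℕ))) ≤ r + k

lemma Finset.exists_pairwise_disjoint_refinement {α : Type*} [DecidableEq (Set α)]
    (B : Finset (Set α)) :
    ∃ C : Finset (Set α), C.card ≤ B.card ∧ (∀ c ∈ C, ∃ b ∈ B, c ⊆ b) ∧
      (↑C : Set (Set α)).Pairwise Disjoint ∧ ⋃₀ (↑C : Set (Set α)) = ⋃₀ ↑B := by
  induction B using Finset.induction_on with
  | empty => exact ⟨∅, by simp⟩
  | @insert b B hb ih =>
    obtain ⟨C, hcard, hrefines, hdisj, hunion⟩ := ih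
    refine ⟨insert (b \ ⋃₀ ↑C) C, ?_, ?_, ?_, ?_⟩
    · grw [Finset.card_insert_le, hcard, Finset.card_insert_of_notMem hb]
    · simp only [Finset.mem_insert, forall_eq_or_imp]
      exact ⟨⟨b, by simp, Set.sdiff_subset⟩, fun c hc =>
        (hrefines c hc).imp fun b' ⟨hb', hcb'⟩ => ⟨Or.inr hb', hcb'⟩⟩
    · rw [Finset.coe_insert, pairwise_insert_of_symm]
      exact ⟨hdisj, fun c hc _ => disjoint_sdiff_left.mono_right (subset_sUnion_of_mem hc)⟩
    · simp only [Finset.coe_insert, sUnion_insert, sdiff_union_self, hunion]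

namespace IsSubmeasureOn

variable {s : Set ℕ} {ψ : Set ℕ → ℝ}

lemma le_add_sUnion_erase (hψ : IsSubmeasureOn s ψ) {B : Finset (Set ℕ)}
    (hsub : ∀ b ∈ B, b ⊆ s) {b : Set ℕ} (hb : b ∈ B) :
    ψ (⋃₀ ↑B) ≤ ψ b + ψ (⋃₀ ↑(B.erase b)) := by
  have hunion : ⋃₀ (↑B : Set (Set ℕ)) = b ∪ ⋃₀ ↑(B.erase b) := by
    rw [← sUnion_insert, ← Finset.coe_insert, Finset.insert_erase hb]
  rw [hunion]
  exact hψ.2.2.2 _ _ (hsub b hb)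
    (sUnion_subset fun c hc => hsub c (Finset.mem_of_mem_erase hc))

/-- Pass to a minimal subfamily whose union still has mass `> r`: dropping any member brings
the mass down to `≤ r`, so by subadditivity each member has positive mass and the union has
mass `≤ r + k`. -/
lemma exists_subfamily_mem_Ioc (hψ : IsSubmeasureOn s ψ) {k r : ℝ} (hr : 0 ≤ r)
    {B : Finset (Set ℕ)} (hsub : ∀ b ∈ B, b ⊆ s) (hk : ∀ b ∈ B, ψ b ≤ k)
    (hgt : r < ψ (⋃₀ ↑B)) :
    ∃ B' ⊆ B, (∀ b ∈ B', 0 < ψ b) ∧ r < ψ (⋃₀ ↑B') ∧ ψ (⋃₀ ↑B') ≤ r + k := by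
  obtain ⟨B', hB'B, hgt', hmin⟩ :=
    exists_minimal_le_of_wellFoundedLT (fun B' : Finset (Set ℕ) => r < ψ (⋃₀ ↑B')) B hgt
  have hsub' : ∀ b ∈ B', b ⊆ s := fun b hb => hsub b (hB'B hb)
  have herase : ∀ b ∈ B', ψ (⋃₀ ↑(B'.erase b)) ≤ r := fun b hb => by
    by_contra! h
    exact (Finset.erase_ssubset hb).not_subset (hmin h (Finset.erase_subset b B'))
  have hsplit : ∀ b ∈ B', ψ (⋃₀ ↑B') ≤ ψ b + r := fun b hb =>
    (hψ.le_add_sUnion_erase hsub' hb).trans (by linarith [herase b hb])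
  obtain ⟨b₀, hb₀⟩ : B'.Nonempty := by
    rw [Finset.nonempty_iff_ne_empty]
    rintro rfl
    simp only [Finset.coe_empty, sUnion_empty, hψ.1] at hgt'
    linarith
  refine ⟨B', hB'B, fun b hb => ?_, hgt', ?_⟩
  · linarith [hsplit b hb]
  · linarith [hsplit b₀ hb₀, hk b₀ (hB'B hb₀)]

lemma exists_isCrossingFamily (hψ : IsSubmeasureOn s ψ) {k r : ℝ} (hr : 0 ≤ r)
    {B : Finset (Set ℕ)} (hsub : ∀ b ∈ B, b ⊆ s) (hk : ∀ b ∈ B, ψ b ≤ k)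
    (hgt : r < ψ (⋃₀ ↑B)) :
    ∃ B', B'.card ≤ B.card ∧ IsCrossingFamily ψ s k r B' := by
  classical
  obtain ⟨C, hcard, hrefines, hdisj, hunion⟩ := B.exists_pairwise_disjoint_refinement
  have hCsub : ∀ c ∈ C, c ⊆ s := fun c hc => by
    obtain ⟨b, hb, hcb⟩ := hrefines c hc
    exact hcb.trans (hsub b hb)
  have hCk : ∀ c ∈ C, ψ c ≤ k := fun c hc => by
    obtain ⟨b, hb, hcb⟩ := hrefines c hc
    exact (hψ.2.2.1 c b hcb (hsub b hb)).trans (hk b hb)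
  obtain ⟨B', hB'C, hpos, hgt', hle'⟩ := hψ.exists_subfamily_mem_Ioc hr hCsub hCk (hunion ▸ hgt)
  exact ⟨B', (Finset.card_le_card hB'C).trans hcard, fun b hb => hCsub b (hB'C hb),
    hdisj.mono (Finset.coe_subset.mpr hB'C), fun b hb => ⟨hpos b hb, hCk b (hB'C hb)⟩,
    hgt', hle'⟩

end IsSubmeasureOn

lemma exists_infinite_crossing_of_not_graduallyFragmented {a : ℕ → Set ℕ}
    {φ : ℕ → Set ℕ → ℝ} (hφ : ∀ j, IsSubmeasureOn (a j) (φ j))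
    (h : ¬ GraduallyFragmented a φ) :
    ∃ k : ℕ, ∀ i : ℕ, ∃ l : ℕ,
      {j | ∃ B : Finset (Set ℕ), B.card = l ∧ IsCrossingFamily (φ j) (a j) k i B}.Infinite := by
  unfold GraduallyFragmented at h
  push Not at h
  obtain ⟨k, hk⟩ := h
  refine ⟨k, fun i => ?_⟩
  obtain ⟨L, hL⟩ := hk i
  rw [Nat.frequently_atTop_iff_infinite] at hL
  by_contra! hfin
  refine hL (((finite_Iic L).biUnion fun l _ => hfin l).subset ?_)
  rintro j ⟨B, hsub, hcard, hk, hgt⟩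
  obtain ⟨B', hcard', hB'⟩ := (hφ j).exists_isCrossingFamily (Nat.cast_nonneg i) hsub hk hgt
  exact mem_biUnion (show B'.card ∈ Iic L from hcard'.trans hcard) ⟨B', rfl, hB'⟩

/-- Enumerate `ℕ × ℕ` via `Nat.pair` and pick a strictly increasing sequence whose `n`-th term
lies in `T (unpair n).1`; its values at `pair i m` form `C i`. -/
lemma exists_pairwise_disjoint_infinite_subsets {T : ℕ → Set ℕ} (hT : ∀ i, (T i).Infinite) :
    ∃ C : ℕ → Set ℕ, (∀ i, C i ⊆ T i) ∧ (∀ i, (C i).Infinite) ∧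
      ∀ i i', i ≠ i' → Disjoint (C i) (C i') := by
  obtain ⟨g, hg, hgT⟩ := extraction_forall_of_frequently (P := fun n j => j ∈ T (Nat.unpair n).1)
    fun n => Nat.frequently_atTop_iff_infinite.mpr (hT _)
  refine ⟨fun i => range fun m => g (Nat.pair i m), ?_, ?_, ?_⟩
  · rintro i _ ⟨m, rfl⟩
    simpa using hgT (Nat.pair i m)
  · exact fun i => infinite_range_of_injective
      (hg.injective.comp fun m m' h => by simpa using congrArg (fun n => (Nat.unpair n).2) h)
  · intro i i' hii'
    rw [disjoint_left]
    rintro _ ⟨m, rfl⟩ ⟨m', hm'⟩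
    have := congrArg (fun n => (Nat.unpair n).1) (hg.injective hm')
    simp only [Nat.unpair_pair] at this
    exact hii' this.symm

/-- Characterization of fragmented, not gradually fragmented ideals: if `I = I⟨a_j, φ_j⟩`
is fragmented but not gradually fragmented, then there are `k < ω`, a sequence `⟨C_i⟩` of
pairwise disjoint infinite subsets of `ω` and a sequence `⟨l_i⟩` of natural numbers such
that for every `i` and every `j ∈ C_i` there is a pairwise disjoint family `B_j` of
subsets of `a_j` with `|B_j| = l_i`, `0 < φ_j(b) ≤ k` for every `b ∈ B_j`, and
`i < φ_j(⋃ B_j) ≤ i + k`. -/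
theorem not_gradually_fragmented_char
    (a : ℕ → Set ℕ) (φ : ℕ → Set ℕ → ℝ) (I : Set (Set ℕ))
    (hfrag : IsFragmentation I a φ)
    (hnotgrad : ¬ GraduallyFragmented a φ) :
    ∃ k : ℕ, ∃ C : ℕ → Set ℕ, ∃ l : ℕ → ℕ,
      (∀ i, (C i).Infinite) ∧
      (∀ i i', i ≠ i' → Disjoint (C i) (C i')) ∧
      ∀ i : ℕ, ∀ j ∈ C i, ∃ B : Finset (Set ℕ),
        (∀ b ∈ B, b ⊆ a j) ∧
        ((↑B : Set (Set ℕ)).Pairwise fun x y => Disjoint x y) ∧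
        B.card = l i ∧
        (∀ b ∈ B, 0 < φ j b ∧ φ j b ≤ (k : ℝ)) ∧
        (i : ℝ) < φ j (⋃₀ (↑B : Set (Set ℕ))) ∧
        φ j (⋃₀ (↑B : Set (Set ℕ))) ≤ (i : ℝ) + (k : ℝ) := by
  obtain ⟨k, hk⟩ := exists_infinite_crossing_of_not_graduallyFragmented hfrag.2.1 hnotgrad
  choose l hl using hk
  obtain ⟨C, hCT, hCinf, hCdisj⟩ := exists_pairwise_disjoint_infinite_subsets hl
  refine ⟨k, C, l, hCinf, hCdisj, fun i j hj => ?_⟩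
  obtain ⟨B, hcard, hsub, hdisj, hbounds, hgt, hle⟩ := hCT i hj
  exact ⟨B, hsub, hdisj, hcard, hbounds, hgt, hle⟩
end

section
/- Let I = I⟨a_i,φ_i⟩ be a fragmented ideal. The following are equivalent: (i) I is tall; (ii) there exists k < ω such that φ_i({j}) ≤ k for every i < ω and every j ∈ a_i; (iii) for every m < ω there exists l > m such that for every i < ω and every x ⊆ a_i with φ_i(x) > m there is x' ⊆ x with m < φ_i(x') ≤ l; (iv) the statement of (iii) for m = 0; (v) there exists m < ω for which the statement of (iii) holds. -/
open Set Filter Cardinal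

/-! Tallness of `I⟨a_i, φ_i⟩` is decided on selectors, the sets meeting every `a_i` in at most one
point: every infinite set contains an infinite selector, and the `φ_i`-masses of a selector are
masses of singletons. Hence `I` is tall iff the singleton masses are bounded by some `k`; if they
are not, points of ever larger mass form an infinite set with no infinite subset in `I`.
Given `k`, a minimal `x' ⊆ x` with `φ_i(x') > m` has `φ_i(x') ≤ m + k` by
subadditivity, which gives (iii); conversely (v) applied to a singleton of mass `> m` bounds its
mass by `l`. -/

namespace IsPartitionFin

variable {a : ℕ → Set ℕ}

theorem exists_mem (ha : IsPartitionFin a) (j : ℕ) : ∃ i, j ∈ a i :=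
  mem_iUnion.1 (ha.2.2.2 ▸ mem_univ j)

theorem eq_of_mem (ha : IsPartitionFin a) {i i' j : ℕ} (hi : j ∈ a i) (hi' : j ∈ a i') :
    i = i' := by
  by_contra hne
  exact (ha.2.2.1 i i' hne).ne_of_mem hi hi' rfl

noncomputable def index (ha : IsPartitionFin a) (j : ℕ) : ℕ := (ha.exists_mem j).choose

theorem mem_index (ha : IsPartitionFin a) (j : ℕ) : j ∈ a (ha.index j) :=
  (ha.exists_mem j).choose_spec

theorem index_eq (ha : IsPartitionFin a) {i j : ℕ} (hj : j ∈ a i) : ha.index j = i :=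
  ha.eq_of_mem (ha.mem_index j) hj

theorem exists_infinite_subset_subsingleton_inter (ha : IsPartitionFin a) {Y : Set ℕ}
    (hY : Y.Infinite) : ∃ Z ⊆ Y, Z.Infinite ∧ ∀ i, (Z ∩ a i).Subsingleton := by
  set S := {i | (Y ∩ a i).Nonempty}
  have hS : S.Infinite := fun hS =>
    hY <| (hS.biUnion fun i _ => ha.2.1 i).subset fun j hj =>
      mem_biUnion ⟨j, hj, ha.mem_index j⟩ (ha.mem_index j)
  choose! g hg using fun i (hi : i ∈ S) => hi
  refine ⟨g '' S, image_subset_iff.2 fun i hi => (hg i hi).1, hS.image ?_, ?_⟩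
  · exact fun i₁ h₁ i₂ h₂ he => ha.eq_of_mem (hg i₁ h₁).2 (he ▸ (hg i₂ h₂).2)
  · rintro i _ ⟨⟨i₁, h₁, rfl⟩, hi₁⟩ _ ⟨⟨i₂, h₂, rfl⟩, hi₂⟩
    rw [ha.eq_of_mem (hg i₁ h₁).2 hi₁, ha.eq_of_mem (hg i₂ h₂).2 hi₂]

end IsPartitionFin

namespace IsSubmeasureOn

variable {s : Set ℕ} {φ : Set ℕ → ℝ}

theorem exists_subset_lt_le_add (hφ : IsSubmeasureOn s φ) {m k : ℝ} (hm : 0 ≤ m)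
    (hk : ∀ j ∈ s, φ {j} ≤ k) {x : Set ℕ} (hx : x.Finite) (hxs : x ⊆ s) (hmx : m < φ x) :
    ∃ x' ⊆ x, m < φ x' ∧ φ x' ≤ m + k := by
  induction x, hx using Set.Finite.induction_on with
  | empty => exact absurd (hφ.1 ▸ hmx) hm.not_gt
  | @insert j y _ hy ih =>
    have hys : y ⊆ s := (subset_insert j y).trans hxs
    by_cases hmy : m < φ y
    · obtain ⟨x', hx'y, hx'⟩ := ih hys hmy
      exact ⟨x', hx'y.trans (subset_insert j y), hx'⟩
    · have hjs : {j} ⊆ s := singleton_subset_iff.2 (hxs (mem_insert j y))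
      refine ⟨insert j y, subset_rfl, hmx, ?_⟩
      calc φ (insert j y) = φ ({j} ∪ y) := rfl
        _ ≤ φ {j} + φ y := hφ.2.2.2 _ _ hjs hys
        _ ≤ m + k := by linarith [hk j (hjs rfl), not_lt.1 hmy]

theorem singleton_le_of_exists_subset_lt_le (hφ : IsSubmeasureOn s φ) {m l : ℝ} (hm : 0 ≤ m)
    (hml : m ≤ l) (H : ∀ x ⊆ s, m < φ x → ∃ x' ⊆ x, m < φ x' ∧ φ x' ≤ l) {j : ℕ}
    (hj : j ∈ s) : φ {j} ≤ l := by
  by_cases hmj : m < φ {j}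
  · obtain ⟨x', hx'j, hmx', hx'l⟩ := H {j} (singleton_subset_iff.2 hj) hmj
    rcases subset_singleton_iff_eq.1 hx'j with rfl | rfl
    · exact absurd (hφ.1 ▸ hmx') hm.not_gt
    · exact hx'l
  · exact (not_lt.1 hmj).trans hml

end IsSubmeasureOn

theorem IsTall.bddAbove_range {I : Set (Set ℕ)} (htall : IsTall I) (w : ℕ → ℝ)
    (hw : ∀ Z ∈ I, BddAbove (w '' Z)) : BddAbove (range w) := by
  by_contra hunb
  have hfreq : ∀ n : ℕ, ∃ᶠ j in atTop, (n : ℝ) < w j := by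
    refine fun n => Nat.frequently_atTop_iff_infinite.2 fun hfin => hunb ?_
    obtain ⟨K, hK⟩ := (hfin.image w).bddAbove
    refine ⟨max n K, forall_mem_range.2 fun j => ?_⟩
    by_cases hj : (n : ℝ) < w j
    · exact (hK ⟨j, hj, rfl⟩).trans (le_max_right _ _)
    · exact (not_lt.1 hj).trans (le_max_left _ _)
  obtain ⟨f, hf, hfw⟩ := extraction_forall_of_frequently hfreq
  obtain ⟨Z, hZf, hZ, hZI⟩ :=
    htall (range f) (subset_univ _) (infinite_range_of_injective hf.injective)
  obtain ⟨K, hK⟩ := hw Z hZI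
  have hpre : (f ⁻¹' Z).Infinite :=
    Infinite.of_image f (by rwa [image_preimage_eq_of_subset hZf])
  obtain ⟨n, hnZ, hKn⟩ := hpre.exists_gt ⌈K⌉₊
  have hKn' : K < n := (Nat.le_ceil K).trans_lt (by exact_mod_cast hKn)
  linarith [hK ⟨f n, hnZ, rfl⟩, hfw n]

namespace IsFragmentation

variable {I : Set (Set ℕ)} {a : ℕ → Set ℕ} {φ : ℕ → Set ℕ → ℝ}

theorem mem_of_subsingleton_inter (hfrag : IsFragmentation I a φ) {k : ℝ} (hk0 : 0 ≤ k)
    (hk : ∀ i, ∀ j ∈ a i, φ i {j} ≤ k) {Z : Set ℕ} (hZ : ∀ i, (Z ∩ a i).Subsingleton) :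
    Z ∈ I := by
  refine (hfrag.2.2 Z).2 ⟨k, fun i => ?_⟩
  rcases (hZ i).eq_empty_or_singleton with hZi | ⟨j, hZi⟩
  · rw [hZi, (hfrag.2.1 i).1]
    exact hk0
  · rw [hZi]
    exact hk i j (hZi ▸ mem_singleton j : j ∈ Z ∩ a i).2

theorem isTall_of_singleton_le (hfrag : IsFragmentation I a φ) {k : ℕ}
    (hk : ∀ i, ∀ j ∈ a i, φ i {j} ≤ k) : IsTall I := fun _ _ hY =>
  (hfrag.1.exists_infinite_subset_subsingleton_inter hY).imp fun _ ⟨hZY, hZ, hZa⟩ =>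
    ⟨hZY, hZ, hfrag.mem_of_subsingleton_inter k.cast_nonneg hk hZa⟩

theorem exists_singleton_le_of_isTall (hfrag : IsFragmentation I a φ) (htall : IsTall I) :
    ∃ k : ℕ, ∀ i, ∀ j ∈ a i, φ i {j} ≤ k := by
  obtain ⟨ha, hφ, hI⟩ := hfrag
  have hbdd : ∀ Z ∈ I, BddAbove ((fun j => φ (ha.index j) {j}) '' Z) := by
    intro Z hZ
    obtain ⟨K, hK⟩ := (hI Z).1 hZ
    refine ⟨K, forall_mem_image.2 fun j hj => ?_⟩
    have hjZ : {j} ⊆ Z ∩ a (ha.index j) := singleton_subset_iff.2 ⟨hj, ha.mem_index j⟩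
    exact ((hφ _).2.2.1 _ _ hjZ inter_subset_right).trans (hK _)
  obtain ⟨K, hK⟩ := htall.bddAbove_range _ hbdd
  refine ⟨⌈K⌉₊, fun i j hj => ?_⟩
  have hjK : φ (ha.index j) {j} ≤ K := hK (mem_range_self j)
  rw [ha.index_eq hj] at hjK
  exact hjK.trans (Nat.le_ceil K)

theorem exists_subset_lt_le (hfrag : IsFragmentation I a φ) {k : ℕ}
    (hk : ∀ i, ∀ j ∈ a i, φ i {j} ≤ k) (m : ℕ) :
    ∃ l : ℕ, m < l ∧ ∀ i : ℕ, ∀ x ⊆ a i, (m : ℝ) < φ i x →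
      ∃ x' ⊆ x, (m : ℝ) < φ i x' ∧ φ i x' ≤ l := by
  refine ⟨m + k + 1, by omega, fun i x hx hmx => ?_⟩
  obtain ⟨x', hx'x, hmx', hx'⟩ := (hfrag.2.1 i).exists_subset_lt_le_add m.cast_nonneg (hk i)
    ((hfrag.1.2.1 i).subset hx) hx hmx
  exact ⟨x', hx'x, hmx', by push_cast; linarith⟩

end IsFragmentation

/-- For a fragmented ideal `I = I⟨a_i, φ_i⟩` the following are equivalent:
(i) `I` is tall;
(ii) there is `k` with `φ_i({j}) ≤ k` for every `i` and `j ∈ a_i`;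
(iii) for every `m` there is `l > m` such that for every `i` and `x ⊆ a_i` with
`φ_i(x) > m` there is `x' ⊆ x` with `m < φ_i(x') ≤ l`;
(iv) statement (iii) for `m = 0`;
(v) statement (iii) for some `m`. -/
theorem tall_fragmented_tfae
    (a : ℕ → Set ℕ) (φ : ℕ → Set ℕ → ℝ) (I : Set (Set ℕ))
    (hfrag : IsFragmentation I a φ) :
    List.TFAE
      [ IsTall I,
        ∃ k : ℕ, ∀ i : ℕ, ∀ j ∈ a i, φ i {j} ≤ (k : ℝ),
        ∀ m : ℕ, ∃ l : ℕ, m < l ∧ ∀ i : ℕ, ∀ x : Set ℕ, x ⊆ a i → (m : ℝ) < φ i x →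
          ∃ x' : Set ℕ, x' ⊆ x ∧ (m : ℝ) < φ i x' ∧ φ i x' ≤ (l : ℝ),
        ∃ l : ℕ, 0 < l ∧ ∀ i : ℕ, ∀ x : Set ℕ, x ⊆ a i → (0 : ℝ) < φ i x →
          ∃ x' : Set ℕ, x' ⊆ x ∧ (0 : ℝ) < φ i x' ∧ φ i x' ≤ (l : ℝ),
        ∃ m : ℕ, ∃ l : ℕ, m < l ∧ ∀ i : ℕ, ∀ x : Set ℕ, x ⊆ a i → (m : ℝ) < φ i x →
          ∃ x' : Set ℕ, x' ⊆ x ∧ (m : ℝ) < φ i x' ∧ φ i x' ≤ (l : ℝ) ] := by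
  tfae_have 1 → 2 := hfrag.exists_singleton_le_of_isTall
  tfae_have 2 → 1 := fun ⟨_, hk⟩ => hfrag.isTall_of_singleton_le hk
  tfae_have 2 → 3 := fun ⟨_, hk⟩ => hfrag.exists_subset_lt_le hk
  tfae_have 3 → 4 := fun h => by simpa using h 0
  tfae_have 4 → 5 := fun ⟨l, hl, H⟩ => ⟨0, l, hl, by simpa using H⟩
  tfae_have 5 → 2 := fun ⟨m, l, hml, H⟩ =>
    ⟨l, fun i j hj => (hfrag.2.1 i).singleton_le_of_exists_subset_lt_le m.cast_nonneg
      (by exact_mod_cast hml.le) (H i) hj⟩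
  tfae_finish
end

section
/- Every non-trivial tall fragmented ideal on ω is not a P-ideal: if I = I⟨a_i,φ_i⟩ is fragmented, tall, and ω ∉ I, then there is a countable family {x^k : k < ω} ⊆ I such that no y ∈ I satisfies x^k ⊆* y for all k < ω. -/
open Set Filter Cardinal

/-!
Tallness bounds the submeasures of singletons by some `K > 0`, while `ω ∉ I` makes the masses
`φ_i(a_i)` unbounded. Adding points one at a time, every block contains a subset whose mass lies in
`[k K, (k + 1) K]` as soon as `φ_i(a_i) ≥ k K`; let `x^k` be the union of such subsets, one per
block (the whole block where `φ_i(a_i) < k K`). Each `x^k` lies in `I`. If `y ∈ I` has all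
masses at most `L < k K`, then `y` misses a point of `x^k` in each of the infinitely many blocks
with `φ_i(a_i) ≥ k K`, so `x^k \ y` is infinite.
-/

open Function

theorem eq_of_mem_of_pairwise_disjoint {ι α : Type*} {a : ι → Set α}
    (ha : Pairwise (Disjoint on a)) {x : α} {i j : ι} (hi : x ∈ a i) (hj : x ∈ a j) : i = j := by
  by_contra hij
  exact disjoint_left.1 (ha hij) hi hj

theorem finite_setOf_inter_nonempty_of_pairwise_disjoint {ι α : Type*} {a : ι → Set α}
    (ha : Pairwise (Disjoint on a)) {S : Set α} (hS : S.Finite) :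
    {i | (S ∩ a i).Nonempty}.Finite := by
  have hS_blocks : {i | (S ∩ a i).Nonempty} = ⋃ x ∈ S, {i | x ∈ a i} := by
    ext i
    simp [Set.Nonempty]
  rw [hS_blocks]
  exact hS.biUnion fun x _ =>
    Subsingleton.finite fun i hi j hj => eq_of_mem_of_pairwise_disjoint ha hi hj

theorem iUnion_inter_eq_of_pairwise_disjoint {ι α : Type*} {a c : ι → Set α}
    (ha : Pairwise (Disjoint on a)) (hc : ∀ j, c j ⊆ a j) (i : ι) :
    (⋃ j, c j) ∩ a i = c i := by
  refine Subset.antisymm ?_ (subset_inter (subset_iUnion c i) (hc i))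
  rintro x ⟨hx, hxi⟩
  obtain ⟨j, hxj⟩ := mem_iUnion.1 hx
  rwa [eq_of_mem_of_pairwise_disjoint ha hxi (hc j hxj)]

theorem infinite_setOf_le_of_not_bddAbove {ι α : Type*} [LinearOrder α] {g : ι → α}
    (hg : ¬BddAbove (range g)) (r : α) : {i | r ≤ g i}.Infinite := by
  have : Nonempty α := ⟨r⟩
  intro hfin
  refine hg (((bddAbove_Iio (a := r)).union (hfin.image g).bddAbove).mono ?_)
  rintro _ ⟨i, rfl⟩
  rcases lt_or_ge (g i) r with hi | hi
  · exact Or.inl hi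
  · exact Or.inr (mem_image_of_mem g hi)

theorem bddAbove_range_of_forall_infinite {α : Type*} {f : α → ℝ}
    (h : ∀ Y : Set α, Y.Infinite → ∃ Z ⊆ Y, Z.Infinite ∧ BddAbove (f '' Z)) :
    BddAbove (range f) := by
  by_contra hf
  have hlarge : ∀ n : ℕ, ∃ x, (n : ℝ) < f x := fun n => by
    by_contra! hn
    exact hf ⟨n, forall_mem_range.2 hn⟩
  choose x hx using hlarge
  have hrange : (range x).Infinite := by
    refine Infinite.of_image f (infinite_of_not_bddAbove fun ⟨K, hK⟩ => ?_)
    obtain ⟨n, hn⟩ := exists_nat_gt K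
    exact (hx n).not_ge ((hK (mem_image_of_mem f (mem_range_self n))).trans hn.le)
  obtain ⟨Z, hZx, hZ, K, hK⟩ := h _ hrange
  refine hZ ((finite_Iio ⌈K⌉₊).image x |>.subset fun z hz => ?_)
  obtain ⟨n, rfl⟩ := hZx hz
  exact ⟨n, Nat.lt_ceil.2 ((hx n).trans_le (hK (mem_image_of_mem f hz))), rfl⟩

theorem IsSubmeasureOn.mono {s : Set ℕ} {φ : Set ℕ → ℝ} (hφ : IsSubmeasureOn s φ) {x y : Set ℕ}
    (hxy : x ⊆ y) (hys : y ⊆ s) : φ x ≤ φ y :=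
  hφ.2.2.1 x y hxy hys

theorem IsSubmeasureOn.exists_subset_mem_Icc {s : Set ℕ} {φ : Set ℕ → ℝ}
    (hφ : IsSubmeasureOn s φ) {K t : ℝ} (hK : 0 ≤ K) (ht : 0 ≤ t)
    (hsing : ∀ x ∈ s, φ {x} ≤ K) {b : Set ℕ} (hb : b.Finite) (hbs : b ⊆ s) (htb : t ≤ φ b) :
    ∃ c ⊆ b, φ c ∈ Icc t (t + K) := by
  induction b, hb using Set.Finite.induction_on with
  | empty =>
    rw [hφ.1] at htb
    exact ⟨∅, subset_rfl, by rw [hφ.1]; constructor <;> linarith⟩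
  | @insert x b _ _ ih =>
    have hbs' : b ⊆ s := (subset_insert x b).trans hbs
    have hxs : x ∈ s := hbs (mem_insert x b)
    by_cases hb : t ≤ φ b
    · obtain ⟨c, hcb, hc⟩ := ih hbs' hb
      exact ⟨c, hcb.trans (subset_insert x b), hc⟩
    · refine ⟨insert x b, subset_rfl, htb, ?_⟩
      calc φ (insert x b) ≤ φ {x} + φ b := hφ.2.2.2 _ _ (singleton_subset_iff.2 hxs) hbs'
        _ ≤ t + K := by linarith [hsing x hxs]

theorem IsSubmeasureOn.exists_subset_le_add {s : Set ℕ} {φ : Set ℕ → ℝ}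
    (hφ : IsSubmeasureOn s φ) (hs : s.Finite) {K t : ℝ} (hK : 0 ≤ K) (ht : 0 ≤ t)
    (hsing : ∀ x ∈ s, φ {x} ≤ K) :
    ∃ c ⊆ s, φ c ≤ t + K ∧ (t ≤ φ s → t ≤ φ c) := by
  by_cases hts : t ≤ φ s
  · obtain ⟨c, hcs, hc⟩ := hφ.exists_subset_mem_Icc hK ht hsing hs subset_rfl hts
    exact ⟨c, hcs, hc.2, fun _ => hc.1⟩
  · exact ⟨s, subset_rfl, by linarith, fun h => absurd h hts⟩

section Fragmentation

variable {I : Set (Set ℕ)} {a : ℕ → Set ℕ} {φ : ℕ → Set ℕ → ℝ}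

theorem IsFragmentation.exists_singleton_le (hfrag : IsFragmentation I a φ) (htall : IsTall I) :
    ∃ K, 0 < K ∧ ∀ i, ∀ x ∈ a i, φ i {x} ≤ K := by
  obtain ⟨ha, hφ, hmem⟩ := hfrag
  choose blk hblk using fun x => mem_iUnion.1 (ha.2.2.2.symm ▸ mem_univ x : x ∈ ⋃ i, a i)
  obtain ⟨K, hK⟩ := bddAbove_range_of_forall_infinite (f := fun x => φ (blk x) {x}) fun Y hY => by
    obtain ⟨Z, hZY, hZ, hZI⟩ := htall Y (subset_univ Y) hY
    obtain ⟨L, hL⟩ := (hmem Z).1 hZI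
    refine ⟨Z, hZY, hZ, bddAbove_def.2 ⟨L, forall_mem_image.2 fun x hx => ?_⟩⟩
    have hx' : x ∈ Z ∩ a (blk x) := ⟨hx, hblk x⟩
    exact ((hφ _).mono (singleton_subset_iff.2 hx') inter_subset_right).trans (hL _)
  refine ⟨max K 1, by positivity, fun i x hx => ?_⟩
  obtain rfl := eq_of_mem_of_pairwise_disjoint ha.2.2.1 hx (hblk x)
  exact (hK (mem_range_self x)).trans (le_max_left K 1)

theorem IsFragmentation.infinite_setOf_le_block (hfrag : IsFragmentation I a φ)
    (hnontriv : Set.univ ∉ I) (r : ℝ) : {i | r ≤ φ i (a i)}.Infinite := by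
  refine infinite_setOf_le_of_not_bddAbove (fun ⟨K, hK⟩ => hnontriv ?_) r
  exact (hfrag.2.2 Set.univ).2 ⟨K, fun i => by simpa using hK (mem_range_self i)⟩

end Fragmentation

/-- Every non-trivial tall fragmented ideal is not a P-ideal: if `I = I⟨a_i, φ_i⟩` is
fragmented, tall and `ω ∉ I`, then there is a countable family `{x^k : k < ω} ⊆ I` such
that no `y ∈ I` satisfies `x^k ⊆* y` for all `k`. -/
theorem tall_fragmented_not_Pideal
    (a : ℕ → Set ℕ) (φ : ℕ → Set ℕ → ℝ) (I : Set (Set ℕ))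
    (hfrag : IsFragmentation I a φ)
    (htall : IsTall I)
    (hnontriv : Set.univ ∉ I) :
    ∃ x : ℕ → Set ℕ, (∀ k, x k ∈ I) ∧ ¬ ∃ y ∈ I, ∀ k, (x k \ y).Finite := by
  obtain ⟨K, hK, hsing⟩ := hfrag.exists_singleton_le htall
  have hlarge := hfrag.infinite_setOf_le_block hnontriv
  obtain ⟨⟨-, hfin, hdisj, -⟩, hφ, hmem⟩ := hfrag
  choose c hca hc_le hc_ge using fun (k i : ℕ) =>
    (hφ i).exists_subset_le_add (hfin i) hK.le (by positivity : (0 : ℝ) ≤ k * K) (hsing i)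
  have hblock := fun k => iUnion_inter_eq_of_pairwise_disjoint hdisj (hca k)
  refine ⟨fun k => ⋃ i, c k i, fun k => (hmem _).2 ⟨k * K + K, fun i => ?_⟩, ?_⟩
  · simpa only [hblock] using hc_le k i
  rintro ⟨y, hy, hxy⟩
  obtain ⟨L, hL⟩ := (hmem y).1 hy
  obtain ⟨k, hk⟩ := exists_nat_gt (L / K)
  obtain ⟨i, hi_large, hi_covered⟩ :=
    ((hlarge (k * K)).sdiff
      (finite_setOf_inter_nonempty_of_pairwise_disjoint hdisj (hxy k))).nonempty
  have hcy : c k i ⊆ y ∩ a i := by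
    rw [mem_ofPred_eq, sdiff_inter_right_comm, hblock, not_nonempty_iff_eq_empty,
      sdiff_eq_empty] at hi_covered
    exact subset_inter hi_covered (hca k i)
  have hkL : k * K ≤ L :=
    (hc_ge k i hi_large).trans (((hφ i).mono hcy inter_subset_right).trans (hL i))
  rw [div_lt_iff₀ hK] at hk
  linarith
end
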